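/- Let A = {1, a, b} be a 2-integral probability group with three distinct elements such that a⁻¹ = b. Then s(a) = s(b) = 1 and p(a·a=b) = p(b·b=a) = p(a·b=1) = p(b·a=1) = 1, while p(a·a=1) = p(a·a=a) = p(b·b=1) = p(b·b=b) = p(a·b=a) = p(a·b=b) = 0. In other words, A is the probability group A(ℂℤ₃) associated to the cyclic group of order 3. -/

import Mathlib

/-- A probability group (Harrison): a set `A` with a distinguished element `one`,
an inverse map `inv`, and a probability map `p` satisfying axioms (1)-(6). -/
structure ProbabilityGroup (A : Type*) where
  /-- the probability map: `p a b c` is `p(a·b = c)` -/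
  p : A → A → A → ℝ
  /-- the unit element -/
  one : A
  /-- the inverse map -/
  inv : A → A
  p_nonneg : ∀ a b c, 0 ≤ p a b c
  finite_support : ∀ a b, {c | p a b c ≠ 0}.Finite
  sum_eq_one : ∀ a b, ∑ᶠ c, p a b c = 1
  assoc : ∀ a b c d, ∑ᶠ x, p a b x * p x c d = ∑ᶠ y, p a y d * p b c y
  one_mul : ∀ a, p one a a = 1
  mul_one : ∀ a, p a one a = 1
  inv_pos : ∀ a, 0 < p a (inv a) one
  inv_unique : ∀ a b, 0 < p a b one → b = inv a
  p_inv : ∀ a b c, p a b c = p (inv b) (inv a) (inv c)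
  inv_symm : ∀ a, p a (inv a) one = p (inv a) a one

/-- The size `s(a) = 1 / p(a·a⁻¹ = 1)` of an element of a probability group. -/
noncomputable def ProbabilityGroup.s {A : Type*} (P : ProbabilityGroup A) (a : A) : ℝ :=
  1 / P.p a (P.inv a) P.one

/-- A probability group is 2-integral if each `s(a)^(1/2)` is a positive integer and
`p(a·b=c) s(a)^(1/2) s(b)^(1/2) / s(c)^(1/2)` is always a non-negative integer. -/
def ProbabilityGroup.TwoIntegral {A : Type*} (P : ProbabilityGroup A) : Prop :=
  (∀ a, ∃ n : ℕ, 0 < n ∧ Real.sqrt (P.s a) = n) ∧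
  (∀ a b c, ∃ n : ℕ,
    P.p a b c * Real.sqrt (P.s a) * Real.sqrt (P.s b) / Real.sqrt (P.s c) = n)

/-- The probability-map data of `A(ℂℤ₃)` on `{1, a, b}` with `a⁻¹ = b`. -/
def ProbabilityGroup.Z3spec {A : Type*} (P : ProbabilityGroup A) (a b : A) : Prop :=
  P.s a = 1 ∧ P.s b = 1 ∧
  P.p a a b = 1 ∧ P.p b b a = 1 ∧ P.p a b P.one = 1 ∧ P.p b a P.one = 1 ∧
  P.p a a P.one = 0 ∧ P.p a a a = 0 ∧ P.p b b P.one = 0 ∧ P.p b b b = 0 ∧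
  P.p a b a = 0 ∧ P.p a b b = 0

/-! Writing `s(a) = n²`, 2-integrality makes the probabilities of `a · a⁻¹` equal to `1/n²` at `1`
and `k/n`, `m/n` at `a`, `a⁻¹` with `k, m ∈ ℕ`; summing to `1` gives `n² = 1 + (k + m) n`, so
`n = 1` and `a · a⁻¹ = 1` surely. Associativity of `(a · a) · a⁻¹`, read at `1`, then gives
`p(a·a = a) ≤ p(a·1 = 1) = 0`, and `p(a·a = 1) = 0` because `a⁻¹ ≠ a`, so `a · a = a⁻¹` surely. -/

theorem finsum_eq_add_add_of_forall_eq_or {α M : Type*} [AddCommMonoid M] (f : α → M)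
    {x y z : α} (hxy : x ≠ y) (hxz : x ≠ z) (hyz : y ≠ z)
    (hcover : ∀ w, w = x ∨ w = y ∨ w = z) :
    ∑ᶠ w, f w = f x + f y + f z := by
  have huniv : (Set.univ : Set α) = {x, y, z} := by
    ext w
    simpa using hcover w
  rw [← finsum_mem_univ, huniv, finsum_mem_insert _ (by simp [hxy, hxz]) (Set.toFinite _),
    finsum_mem_pair hyz, add_assoc]

theorem eq_zero_of_finsum_eq_one_of_eq_one {α : Type*} {f : α → ℝ}
    (hfin : (Function.support f).Finite) (hnonneg : ∀ c, 0 ≤ f c) (hsum : ∑ᶠ c, f c = 1)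
    {x y : α} (hx : f x = 1) (hyx : y ≠ x) : f y = 0 := by
  classical
  let s := insert x (insert y hfin.toFinset)
  have hpair : f y + f x ≤ ∑ c ∈ s, f c := by
    rw [← Finset.sum_pair hyx]
    exact Finset.sum_le_sum_of_subset_of_nonneg (fun c hc => by
      simp only [s, Finset.mem_insert, Finset.mem_singleton] at hc ⊢; tauto)
      fun c _ _ => hnonneg c
  rw [← finsum_eq_sum_of_support_subset f (s := s) (by intro c hc; simp [s, hc])] at hpair
  linarith [hnonneg y]

theorem Nat.eq_one_of_mul_self_eq_one_add_mul {n j : ℕ} (h : n * n = 1 + j * n) :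
    n = 1 ∧ j = 0 := by
  have hn : n = 1 := by
    rw [← Nat.dvd_one]
    exact (Nat.dvd_add_left (dvd_mul_left n j)).mp (h ▸ dvd_mul_left n n)
  subst hn
  omega

namespace ProbabilityGroup

variable {A : Type*} (P : ProbabilityGroup A)

theorem p_mul_one_eq_zero {a c : A} (hca : c ≠ a) : P.p a P.one c = 0 :=
  eq_zero_of_finsum_eq_one_of_eq_one (P.finite_support _ _) (P.p_nonneg _ _) (P.sum_eq_one _ _)
    (P.mul_one a) hca

theorem p_one_eq_zero_of_ne_inv {a b : A} (hb : b ≠ P.inv a) : P.p a b P.one = 0 :=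
  (P.p_nonneg a b P.one).antisymm' (not_lt.mp fun hpos => hb (P.inv_unique a b hpos))

theorem inv_inv (a : A) : P.inv (P.inv a) = a :=
  (P.inv_unique _ _ (P.inv_symm a ▸ P.inv_pos a)).symm

theorem s_inv (a : A) : P.s (P.inv a) = P.s a := by
  rw [s, s, inv_inv, P.inv_symm a]

theorem s_pos (a : A) : 0 < P.s a :=
  one_div_pos.mpr (P.inv_pos a)

theorem p_mul_inv_one_mul_s (a : A) : P.p a (P.inv a) P.one * P.s a = 1 :=
  mul_one_div_cancel (P.inv_pos a).ne'

theorem p_mul_inv_one_eq_one_of_s_eq_one {a : A} (hs : P.s a = 1) :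
    P.p a (P.inv a) P.one = 1 := by
  simpa [hs] using P.p_mul_inv_one_mul_s a

theorem p_mul_inv_eq_zero_of_s_eq_one {a c : A} (hs : P.s a = 1) (hc : c ≠ P.one) :
    P.p a (P.inv a) c = 0 :=
  eq_zero_of_finsum_eq_one_of_eq_one (P.finite_support _ _) (P.p_nonneg _ _) (P.sum_eq_one _ _)
    (P.p_mul_inv_one_eq_one_of_s_eq_one hs) hc

theorem p_mul_self_self_eq_zero_of_s_eq_one {a : A} (ha : a ≠ P.one) (hs : P.s a = 1) :
    P.p a a a = 0 := by
  have hrhs : ∑ᶠ y, P.p a y P.one * P.p a (P.inv a) y = 0 := by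
    rw [finsum_eq_single _ P.one fun y hy => by
      rw [P.p_mul_inv_eq_zero_of_s_eq_one hs hy, mul_zero]]
    rw [P.p_mul_one_eq_zero ha.symm, zero_mul]
  have hle : P.p a a a * P.p a (P.inv a) P.one ≤ ∑ᶠ x, P.p a a x * P.p x (P.inv a) P.one :=
    single_le_finsum (f := fun x => P.p a a x * P.p x (P.inv a) P.one) a
      ((P.finite_support a a).subset fun x hx => left_ne_zero_of_mul hx)
      fun x => mul_nonneg (P.p_nonneg _ _ _) (P.p_nonneg _ _ _)
  rw [P.assoc, hrhs, P.p_mul_inv_one_eq_one_of_s_eq_one hs, _root_.mul_one] at hle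
  exact hle.antisymm (P.p_nonneg a a a)

theorem TwoIntegral.s_eq_one {P : ProbabilityGroup A} (h2 : P.TwoIntegral) {a : A}
    (hsum : P.p a (P.inv a) P.one + P.p a (P.inv a) a + P.p a (P.inv a) (P.inv a) = 1) :
    P.s a = 1 ∧ P.p a (P.inv a) a = 0 ∧ P.p a (P.inv a) (P.inv a) = 0 := by
  obtain ⟨n, hn, hsqrt⟩ := h2.1 a
  have hsqrt_inv : √(P.s (P.inv a)) = n := by rw [P.s_inv, hsqrt]
  obtain ⟨k, hk⟩ := h2.2 a (P.inv a) a
  obtain ⟨m, hm⟩ := h2.2 a (P.inv a) (P.inv a)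
  rw [hsqrt, hsqrt_inv, mul_div_assoc] at hk hm
  have hn0 : (n : ℝ) ≠ 0 := by positivity
  rw [div_self hn0, _root_.mul_one] at hk hm
  have hs : P.s a = n ^ 2 := by rw [← hsqrt, Real.sq_sqrt (P.s_pos a).le]
  have hone := P.p_mul_inv_one_mul_s a
  rw [hs] at hone
  have hnat : n * n = 1 + (k + m) * n := by
    exact_mod_cast (by linear_combination (-(n : ℝ) ^ 2) * hsum + hone + n * hk + n * hm :
      (n : ℝ) * n = 1 + ((k : ℝ) + m) * n)
  obtain ⟨rfl, hkm⟩ := Nat.eq_one_of_mul_self_eq_one_add_mul hnat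
  obtain ⟨rfl, rfl⟩ : k = 0 ∧ m = 0 := by omega
  exact ⟨by simpa using hs, by simpa using hk, by simpa using hm⟩

end ProbabilityGroup

/-- A 2-integral probability group `{1, a, b}` with `a⁻¹ = b` is the probability group
`A(ℂℤ₃)` associated to the cyclic group of order 3. -/
theorem twoIntegral_card_three_invPair {A : Type*} (P : ProbabilityGroup A) (a b : A)
    (ha : a ≠ P.one) (hb : b ≠ P.one) (hab : a ≠ b)
    (henum : ∀ x : A, x = P.one ∨ x = a ∨ x = b)
    (hiab : P.inv a = b)
    (h2 : P.TwoIntegral) :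
    P.Z3spec a b := by
  subst hiab
  have hsum : ∀ x y, P.p x y P.one + P.p x y a + P.p x y (P.inv a) = 1 := fun x y => by
    rw [← P.sum_eq_one x y, finsum_eq_add_add_of_forall_eq_or _ ha.symm hb.symm hab henum]
  obtain ⟨hsa, hpaba, hpabb⟩ := h2.s_eq_one (hsum a (P.inv a))
  have hsb : P.s (P.inv a) = 1 := (P.s_inv a).trans hsa
  have hpab1 := P.p_mul_inv_one_eq_one_of_s_eq_one hsa
  have hpba1 : P.p (P.inv a) a P.one = 1 := P.inv_symm a ▸ hpab1
  have hpaa1 : P.p a a P.one = 0 := P.p_one_eq_zero_of_ne_inv hab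
  have hpbb1 : P.p (P.inv a) (P.inv a) P.one = 0 :=
    P.p_one_eq_zero_of_ne_inv (by rwa [P.inv_inv, ne_comm])
  have hpaaa := P.p_mul_self_self_eq_zero_of_s_eq_one ha hsa
  have hpbbb := P.p_mul_self_self_eq_zero_of_s_eq_one hb hsb
  exact ⟨hsa, hsb, by linarith [hsum a a], by linarith [hsum (P.inv a) (P.inv a)], hpab1, hpba1,
    hpaa1, hpaaa, hpbb1, hpbbb, hpaba, hpabb⟩
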